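/- Let (1_X, g, h) be a map of triangles from a distinguished triangle X →u Y →v Z →w ΣX to a distinguished triangle X →u' Y' →v' Z' →w' ΣX whose first component is the identity of X. Then (1_X, g, h) is good if and only if the candidate triangle Y →(g,v)ᵀ Y'⊕Z →[v', −h] Z' →(Σu)∘w' ΣY is a distinguished triangle, i.e., if and only if the middle square (with maps v, g, h, v') is homotopy cartesian with differential (Σu)∘w'. -/

import Mathlib

open CategoryTheory Category Limits Pretriangulated

universe v u

variable {C : Type u} [Category.{v} C] [Preadditive C] [HasZeroObject C]
  [HasShift C ℤ] [∀ n : ℤ, (shiftFunctor C n).Additive] [Pretriangulated C]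
  [IsTriangulated C] [HasBinaryBiproducts C]

noncomputable local instance (n : ℤ) : PreservesBinaryBiproducts (shiftFunctor C n) :=
  preservesBinaryBiproducts_of_preservesBiproducts _

/-- The condition that `(f, g, h)` is a morphism of triangles from `T` to `T'`. -/
def IsTriMap (T T' : Triangle C) (f : T.obj₁ ⟶ T'.obj₁) (g : T.obj₂ ⟶ T'.obj₂)
    (h : T.obj₃ ⟶ T'.obj₃) : Prop :=
  T.mor₁ ≫ g = f ≫ T'.mor₁ ∧ T.mor₂ ≫ h = g ≫ T'.mor₂ ∧
    T.mor₃ ≫ f⟦(1 : ℤ)⟧' = h ≫ T'.mor₃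

/-- The mapping cone of a morphism of triangles. -/
noncomputable def mappingCone (T T' : Triangle C) (f : T.obj₁ ⟶ T'.obj₁)
    (g : T.obj₂ ⟶ T'.obj₂) (h : T.obj₃ ⟶ T'.obj₃) : Triangle C :=
  Triangle.mk
    (biprod.desc (biprod.lift T'.mor₁ 0) (biprod.lift g (-T.mor₂)) :
      T'.obj₁ ⊞ T.obj₂ ⟶ T'.obj₂ ⊞ T.obj₃)
    (biprod.desc (biprod.lift T'.mor₂ 0) (biprod.lift h (-T.mor₃)) :
      T'.obj₂ ⊞ T.obj₃ ⟶ T'.obj₃ ⊞ T.obj₁⟦(1 : ℤ)⟧)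
    (biprod.desc (biprod.lift T'.mor₃ 0)
        (biprod.lift (f⟦(1 : ℤ)⟧') (-(T.mor₁⟦(1 : ℤ)⟧'))) ≫
      ((shiftFunctor C (1 : ℤ)).mapBiprod T'.obj₁ T.obj₂).inv)

/-- A morphism of triangles is good if its mapping cone is distinguished. -/
noncomputable def IsGood (T T' : Triangle C) (f : T.obj₁ ⟶ T'.obj₁)
    (g : T.obj₂ ⟶ T'.obj₂) (h : T.obj₃ ⟶ T'.obj₃) : Prop :=
  mappingCone T T' f g h ∈ distTriang C

/-- An octahedron on composable maps `a`, `b`, given distinguished triangles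
`(a, p₁, q₁)`, `(b, p₂, q₂)` and `(a ≫ b, p₃, q₃)`, is a pair `(m, n)` as below. -/
def IsOctahedron {A₁ A₂ A₃ B₁ B₂ B₃ : C} (a : A₁ ⟶ A₂) (b : A₂ ⟶ A₃)
    (p₁ : A₂ ⟶ B₁) (q₁ : B₁ ⟶ A₁⟦(1 : ℤ)⟧)
    (p₂ : A₃ ⟶ B₂) (q₂ : B₂ ⟶ A₂⟦(1 : ℤ)⟧)
    (p₃ : A₃ ⟶ B₃) (q₃ : B₃ ⟶ A₁⟦(1 : ℤ)⟧)
    (m : B₁ ⟶ B₃) (n : B₃ ⟶ B₂) : Prop :=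
  p₁ ≫ m = b ≫ p₃ ∧ m ≫ q₃ = q₁ ∧ p₃ ≫ n = p₂ ∧ n ≫ q₂ = q₃ ≫ a⟦(1 : ℤ)⟧' ∧
    (Triangle.mk m n (q₂ ≫ p₁⟦(1 : ℤ)⟧') ∈ distTriang C)

/-- A morphism of triangles `(f, g, h)` is Verdier good if `h` arises from Verdier's
construction via two octahedra on the composite `g ∘ u = u' ∘ f`. -/
def IsVerdierGood (T T' : Triangle C) (f : T.obj₁ ⟶ T'.obj₁) (g : T.obj₂ ⟶ T'.obj₂)
    (h : T.obj₃ ⟶ T'.obj₃) : Prop :=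
  ∃ (A Y'' X'' : C) (vt : T'.obj₂ ⟶ A) (wt : A ⟶ T.obj₁⟦(1 : ℤ)⟧)
    (g' : T'.obj₂ ⟶ Y'') (g'' : Y'' ⟶ T.obj₂⟦(1 : ℤ)⟧)
    (f' : T'.obj₁ ⟶ X'') (f'' : X'' ⟶ T.obj₁⟦(1 : ℤ)⟧)
    (α₁ : T.obj₃ ⟶ A) (β₁ : A ⟶ Y'') (α₂ : X'' ⟶ A) (β₂ : A ⟶ T'.obj₃),
    (Triangle.mk (T.mor₁ ≫ g) vt wt ∈ distTriang C) ∧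
    (Triangle.mk g g' g'' ∈ distTriang C) ∧
    (Triangle.mk f f' f'' ∈ distTriang C) ∧
    IsOctahedron T.mor₁ g T.mor₂ T.mor₃ g' g'' vt wt α₁ β₁ ∧
    IsOctahedron f T'.mor₁ f' f'' T'.mor₂ T'.mor₃ vt wt α₂ β₂ ∧
    h = α₁ ≫ β₂

/-- The morphism of triangles `(f, g, h)` is nullhomotopic, in the (equivalent)
`Σ`-applied formulation of the first equation. -/
def IsNullHomotopic (T T' : Triangle C) (f : T.obj₁ ⟶ T'.obj₁) (g : T.obj₂ ⟶ T'.obj₂)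
    (h : T.obj₃ ⟶ T'.obj₃) : Prop :=
  ∃ (F : T.obj₂ ⟶ T'.obj₁) (G : T.obj₃ ⟶ T'.obj₂) (H : T.obj₁⟦(1 : ℤ)⟧ ⟶ T'.obj₃),
    f⟦(1 : ℤ)⟧' = T.mor₁⟦(1 : ℤ)⟧' ≫ F⟦(1 : ℤ)⟧' + H ≫ T'.mor₃ ∧
    g = T.mor₂ ≫ G + F ≫ T'.mor₁ ∧
    h = T.mor₃ ≫ H + G ≫ T'.mor₂

/-- A triangle is contractible if its identity morphism is nullhomotopic. -/
def IsContractible (T : Triangle C) : Prop :=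
  IsNullHomotopic T T (𝟙 T.obj₁) (𝟙 T.obj₂) (𝟙 T.obj₃)

/-- A morphism of triangles is middling good if it extends to a 4 × 4 diagram. -/
def IsMiddlingGood (T T' : Triangle C) (f : T.obj₁ ⟶ T'.obj₁) (g : T.obj₂ ⟶ T'.obj₂)
    (h : T.obj₃ ⟶ T'.obj₃) : Prop :=
  ∃ (X'' Y'' Z'' : C)
    (f' : T'.obj₁ ⟶ X'') (f'' : X'' ⟶ T.obj₁⟦(1 : ℤ)⟧)
    (g' : T'.obj₂ ⟶ Y'') (g'' : Y'' ⟶ T.obj₂⟦(1 : ℤ)⟧)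
    (h' : T'.obj₃ ⟶ Z'') (h'' : Z'' ⟶ T.obj₃⟦(1 : ℤ)⟧)
    (u'' : X'' ⟶ Y'') (v'' : Y'' ⟶ Z'') (w'' : Z'' ⟶ X''⟦(1 : ℤ)⟧),
    (Triangle.mk f f' f'' ∈ distTriang C) ∧
    (Triangle.mk g g' g'' ∈ distTriang C) ∧
    (Triangle.mk h h' h'' ∈ distTriang C) ∧
    (Triangle.mk u'' v'' w'' ∈ distTriang C) ∧
    T'.mor₁ ≫ g' = f' ≫ u'' ∧
    T'.mor₂ ≫ h' = g' ≫ v'' ∧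
    T'.mor₃ ≫ f'⟦(1 : ℤ)⟧' = h' ≫ w'' ∧
    u'' ≫ g'' = f'' ≫ T.mor₁⟦(1 : ℤ)⟧' ∧
    v'' ≫ h'' = g'' ≫ T.mor₂⟦(1 : ℤ)⟧' ∧
    h'' ≫ T.mor₃⟦(1 : ℤ)⟧' = -(w'' ≫ f''⟦(1 : ℤ)⟧')

/-- A candidate triangle `(a, b, c)` is replaceably exact if each of its three maps
can be replaced to give a distinguished triangle. -/
def ReplaceablyExact {A B D : C} (a : A ⟶ B) (b : B ⟶ D) (c : D ⟶ A⟦(1 : ℤ)⟧) : Prop :=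
  (∃ a' : A ⟶ B, Triangle.mk a' b c ∈ distTriang C) ∧
  (∃ b' : B ⟶ D, Triangle.mk a b' c ∈ distTriang C) ∧
  (∃ c' : D ⟶ A⟦(1 : ℤ)⟧, Triangle.mk a b c' ∈ distTriang C)

section StmtNineAux

open Triangulated

lemma stmt9_snd_dist (X Y : C) :
    Triangle.mk (biprod.snd : X ⊞ Y ⟶ Y) (0 : Y ⟶ X⟦(1 : ℤ)⟧)
      (-(biprod.inl : X ⟶ X ⊞ Y)⟦(1 : ℤ)⟧') ∈ distTriang C :=
  rot_of_distTriang _ (binaryBiproductTriangle_distinguished X Y)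

lemma stmt9_key1 {X Y Z' : C} (c : Z' ⟶ Y⟦(1 : ℤ)⟧) :
    (biprod.desc (biprod.lift 0 c) (biprod.lift (𝟙 (X⟦(1 : ℤ)⟧)) 0) ≫
        ((shiftFunctor C (1 : ℤ)).mapBiprod X Y).inv) ≫
      (shiftFunctor C (1 : ℤ)).map (biprod.fst : X ⊞ Y ⟶ X) = biprod.snd := by
  ext <;> simp only [Functor.mapBiprod_inv, assoc, biprod.inl_desc_assoc, biprod.inr_desc_assoc] <;>
    erw [biprod.lift_desc_assoc] <;> simp [← Functor.map_comp]

lemma stmt9_key2 {X Y Z' : C} (c : Z' ⟶ Y⟦(1 : ℤ)⟧) :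
    (biprod.desc (biprod.lift 0 c) (biprod.lift (𝟙 (X⟦(1 : ℤ)⟧)) 0) ≫
        ((shiftFunctor C (1 : ℤ)).mapBiprod X Y).inv) ≫
      (shiftFunctor C (1 : ℤ)).map (biprod.snd : X ⊞ Y ⟶ Y) = biprod.fst ≫ c := by
  ext <;> simp only [Functor.mapBiprod_inv, assoc, biprod.inl_desc_assoc, biprod.inr_desc_assoc] <;>
    erw [biprod.lift_desc_assoc] <;> simp [← Functor.map_comp]

lemma stmt9_liftinv_assoc {W X Y V : C} (f : W ⟶ X⟦(1 : ℤ)⟧) (g : W ⟶ Y⟦(1 : ℤ)⟧)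
    (k : (X ⊞ Y)⟦(1 : ℤ)⟧ ⟶ V) :
    biprod.lift f g ≫ ((shiftFunctor C (1 : ℤ)).mapBiprod X Y).inv ≫ k =
      f ≫ (biprod.inl : X ⟶ X ⊞ Y)⟦(1 : ℤ)⟧' ≫ k + g ≫ (biprod.inr : Y ⟶ X ⊞ Y)⟦(1 : ℤ)⟧' ≫ k := by
  rw [Functor.mapBiprod_inv]
  erw [biprod.lift_desc_assoc]
  simp only [Preadditive.add_comp, assoc]

lemma stmt9_liftinv {W X Y : C} (f : W ⟶ X⟦(1 : ℤ)⟧) (g : W ⟶ Y⟦(1 : ℤ)⟧) :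
    biprod.lift f g ≫ ((shiftFunctor C (1 : ℤ)).mapBiprod X Y).inv =
      f ≫ (biprod.inl : X ⟶ X ⊞ Y)⟦(1 : ℤ)⟧' + g ≫ (biprod.inr : Y ⟶ X ⊞ Y)⟦(1 : ℤ)⟧' := by
  rw [Functor.mapBiprod_inv]
  erw [biprod.lift_desc]

/-- The "sum" direction: if `(a, b, c)` is distinguished, then its direct sum with the
contractible triangle `X ⟶ 0 ⟶ X⟦1⟧ ⟶ X⟦1⟧` is distinguished. -/
lemma stmt9_sum {X Y B Z' : C} (a : Y ⟶ B) (b : B ⟶ Z') (c : Z' ⟶ Y⟦(1 : ℤ)⟧)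
    (hT2 : Triangle.mk a b c ∈ distTriang C) :
    Triangle.mk (biprod.snd ≫ a : X ⊞ Y ⟶ B)
      (biprod.lift b (0 : B ⟶ X⟦(1 : ℤ)⟧))
      (biprod.desc (biprod.lift 0 c) (biprod.lift (𝟙 (X⟦(1 : ℤ)⟧)) 0) ≫
        ((shiftFunctor C (1 : ℤ)).mapBiprod X Y).inv) ∈ distTriang C := by
  obtain ⟨Q, e, q, hQ⟩ := distinguished_cocone_triangle (biprod.snd ≫ a : X ⊞ Y ⟶ B)
  have oct := Triangulated.someOctahedron rfl (stmt9_snd_dist X Y) hT2 hQ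
  have hsplit : Triangle.mk oct.m₁ oct.m₃ 0 ∈ distTriang C := by
    simpa using oct.mem
  have hm13 : oct.m₁ ≫ oct.m₃ = 0 := comp_distTriang_mor_zero₁₂ _ hsplit
  have heq : e ≫ q = 0 := comp_distTriang_mor_zero₂₃ _ hQ
  have hm1q : oct.m₁ ≫ q = -((biprod.inl : X ⟶ X ⊞ Y)⟦(1 : ℤ)⟧') := oct.comm₂
  have hS1 : ((biprod.inl : X ⟶ X ⊞ Y)⟦(1 : ℤ)⟧') ≫
      ((biprod.fst : X ⊞ Y ⟶ X)⟦(1 : ℤ)⟧') = 𝟙 _ := by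
    rw [← Functor.map_comp, biprod.inl_fst]
    simp
  set φ : Q ⟶ Z' ⊞ X⟦(1 : ℤ)⟧ :=
    biprod.lift oct.m₃ (q ≫ (biprod.fst : X ⊞ Y ⟶ X)⟦(1 : ℤ)⟧') with hφ
  obtain ⟨σ, hσ⟩ : ∃ σ : Z' ⟶ Q, 𝟙 Z' = σ ≫ oct.m₃ :=
    Triangle.coyoneda_exact₃ _ hsplit (𝟙 Z') (by exact comp_zero)
  set σ' : Z' ⟶ Q := σ + (σ ≫ q ≫ (biprod.fst : X ⊞ Y ⟶ X)⟦(1 : ℤ)⟧') ≫ oct.m₁ with hσ'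
  set μ : Z' ⊞ X⟦(1 : ℤ)⟧ ⟶ Q := biprod.desc σ' (-oct.m₁) with hμ
  have hμφ : μ ≫ φ = 𝟙 _ := by
    ext <;>
      simp [hμ, hφ, hσ', ← hσ, hm13, reassoc_of% hm1q, hS1, reassoc_of% hS1]
  have hφμ : φ ≫ μ = 𝟙 _ := by
    have hρφ : (φ ≫ μ - 𝟙 Q) ≫ φ = 0 := by
      rw [Preadditive.sub_comp, assoc, hμφ, comp_id, id_comp, sub_self]
    obtain ⟨ζ, hζ⟩ : ∃ ζ : Q ⟶ X⟦(1 : ℤ)⟧, φ ≫ μ - 𝟙 Q = ζ ≫ oct.m₁ :=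
      Triangle.coyoneda_exact₂ _ hsplit (φ ≫ μ - 𝟙 Q) (by
        have h0 : ((φ ≫ μ - 𝟙 Q) ≫ φ) ≫ biprod.fst = 0 := by rw [hρφ, zero_comp]
        show (φ ≫ μ - 𝟙 Q) ≫ oct.m₃ = 0
        simpa [hφ] using h0)
    have hz : ζ = 0 := by
      have h1 : ((φ ≫ μ - 𝟙 Q) ≫ φ) ≫ biprod.snd = 0 := by rw [hρφ, zero_comp]
      rw [assoc, hφ, biprod.lift_snd, hζ] at h1
      rw [assoc, reassoc_of% hm1q] at h1
      simpa [hS1] using h1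
    rw [← sub_eq_zero, hζ, hz, zero_comp]
  have hIso : IsIso φ := ⟨μ, hφμ, hμφ⟩
  refine isomorphic_distinguished _ hQ _ ?_
  refine (Triangle.isoMk (Triangle.mk (biprod.snd ≫ a : X ⊞ Y ⟶ B) e q)
    (Triangle.mk (biprod.snd ≫ a : X ⊞ Y ⟶ B)
      (biprod.lift b (0 : B ⟶ X⟦(1 : ℤ)⟧))
      (biprod.desc (biprod.lift 0 c) (biprod.lift (𝟙 (X⟦(1 : ℤ)⟧)) 0) ≫
        ((shiftFunctor C (1 : ℤ)).mapBiprod X Y).inv))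
    (Iso.refl _) (Iso.refl _) (@asIso _ _ _ _ φ hIso) (by exact (comp_id _).trans (id_comp _).symm) ?_ ?_).symm
  · -- e ≫ φ = biprod.lift b 0
    show e ≫ φ = 𝟙 B ≫ biprod.lift b 0
    rw [id_comp]
    ext
    · simpa [hφ] using oct.comm₃
    · simp [hφ, reassoc_of% heq]
  · -- q ≫ 𝟙⟦1⟧' = φ ≫ mor₃
    show q ≫ (shiftFunctor C 1).map (𝟙 (X ⊞ Y)) = φ ≫ (biprod.desc (biprod.lift 0 c)
      (biprod.lift (𝟙 (X⟦(1 : ℤ)⟧)) 0) ≫ ((shiftFunctor C (1 : ℤ)).mapBiprod X Y).inv)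
    rw [hφ, CategoryTheory.Functor.map_id, comp_id, ← assoc, biprod.lift_desc,
      Preadditive.add_comp, assoc, assoc, Functor.mapBiprod_inv]
    erw [biprod.lift_desc, biprod.lift_desc]
    simp only [zero_comp, zero_add, id_comp, add_zero]
    rw [← reassoc_of% oct.comm₄]
    simp only [assoc]
    rw [← Functor.map_comp, ← Functor.map_comp, ← Preadditive.comp_add, ← Functor.map_add]
    rw [show (biprod.snd : X ⊞ Y ⟶ Y) ≫ biprod.inr + biprod.fst ≫ biprod.inl = 𝟙 (X ⊞ Y) by
      rw [add_comm]; exact biprod.total]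
    simp

/-- The "extraction" direction: if the direct sum with the contractible triangle
`X ⟶ 0 ⟶ X⟦1⟧ ⟶ X⟦1⟧` is distinguished, then `(a, b, c)` is distinguished. -/
lemma stmt9_extract {X Y B Z' : C} (a : Y ⟶ B) (b : B ⟶ Z') (c : Z' ⟶ Y⟦(1 : ℤ)⟧)
    (hD : Triangle.mk (biprod.snd ≫ a : X ⊞ Y ⟶ B)
      (biprod.lift b (0 : B ⟶ X⟦(1 : ℤ)⟧))
      (biprod.desc (biprod.lift 0 c) (biprod.lift (𝟙 (X⟦(1 : ℤ)⟧)) 0) ≫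
        ((shiftFunctor C (1 : ℤ)).mapBiprod X Y).inv) ∈ distTriang C) :
    Triangle.mk a b c ∈ distTriang C := by
  obtain ⟨Q₀, b₀, c₀, hT₃⟩ := distinguished_cocone_triangle a
  have oct := Triangulated.someOctahedron rfl (stmt9_snd_dist X Y) hT₃ hD
  have hsplit : Triangle.mk oct.m₁ oct.m₃ 0 ∈ distTriang C := by
    simpa using oct.mem
  have hm13 : oct.m₁ ≫ oct.m₃ = 0 := comp_distTriang_mor_zero₁₂ _ hsplit
  have hm1snd : oct.m₁ ≫ (biprod.snd : Z' ⊞ X⟦(1 : ℤ)⟧ ⟶ X⟦(1 : ℤ)⟧) = -𝟙 _ := by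
    rw [← stmt9_key1 (X := X) (Y := Y) c, ← assoc, oct.comm₂]
    simp [← Functor.map_comp]
  set ψ : Z' ⟶ Q₀ := biprod.inl ≫ oct.m₃ with hψ
  have hbψ : b ≫ ψ = b₀ := by
    have h := oct.comm₃
    rw [hψ, ← assoc,
      show (b ≫ biprod.inl : B ⟶ Z' ⊞ X⟦(1 : ℤ)⟧) = biprod.lift b 0 by ext <;> simp]
    exact h
  have hψc : ψ ≫ c₀ = c := by
    have h := oct.comm₄
    rw [stmt9_key2] at h
    rw [hψ, assoc, ← h, ← assoc, biprod.inl_fst, id_comp]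
  obtain ⟨σ, hσ⟩ : ∃ σ : Q₀ ⟶ Z' ⊞ X⟦(1 : ℤ)⟧, 𝟙 Q₀ = σ ≫ oct.m₃ :=
    Triangle.coyoneda_exact₃ _ hsplit (𝟙 Q₀) (by exact comp_zero)
  set p : Z' ⊞ X⟦(1 : ℤ)⟧ ⟶ Z' := biprod.desc (𝟙 Z') (oct.m₁ ≫ biprod.fst) with hp
  have hfst : (biprod.fst : Z' ⊞ X⟦(1 : ℤ)⟧ ⟶ Z') ≫ biprod.inl
      = 𝟙 _ - biprod.snd ≫ biprod.inr := eq_sub_iff_add_eq.mpr biprod.total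
  have h2 : oct.m₁ ≫ (biprod.fst ≫ biprod.inl) ≫ oct.m₃ = biprod.inr ≫ oct.m₃ := by
    rw [hfst]
    simp [Preadditive.sub_comp, Preadditive.comp_sub, reassoc_of% hm1snd, hm13]
  have hpψ : p ≫ ψ = oct.m₃ := by
    ext
    · simp [hp, hψ]
    · simpa [hp, hψ] using h2
  have hτψ : (σ ≫ p) ≫ ψ = 𝟙 Q₀ := by
    rw [assoc, hpψ]; exact hσ.symm
  have hψτ : ψ ≫ σ ≫ p = 𝟙 Z' := by
    have hρψ : (ψ ≫ (σ ≫ p) - 𝟙 Z') ≫ ψ = 0 := by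
      rw [Preadditive.sub_comp, assoc, hτψ, comp_id, id_comp, sub_self]
    obtain ⟨ζ, hζ⟩ : ∃ ζ : Z' ⟶ X⟦(1 : ℤ)⟧,
        (ψ ≫ (σ ≫ p) - 𝟙 Z') ≫ biprod.inl = ζ ≫ oct.m₁ :=
      Triangle.coyoneda_exact₂ _ hsplit
        ((ψ ≫ (σ ≫ p) - 𝟙 Z') ≫ biprod.inl) (by
          show ((ψ ≫ (σ ≫ p) - 𝟙 Z') ≫ biprod.inl) ≫ oct.m₃ = 0
          rw [assoc]
          exact hρψ)
    have hz : ζ = 0 := by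
      have h1 : ((ψ ≫ (σ ≫ p) - 𝟙 Z') ≫ (biprod.inl : Z' ⟶ Z' ⊞ X⟦(1 : ℤ)⟧)) ≫
          biprod.snd = 0 := by simp
      rw [hζ, assoc, hm1snd] at h1
      simpa using h1
    have h3 : (ψ ≫ (σ ≫ p) - 𝟙 Z') ≫ (biprod.inl : Z' ⟶ Z' ⊞ X⟦(1 : ℤ)⟧) = 0 := by
      rw [hζ, hz, zero_comp]
    have h4 := h3 =≫ biprod.fst
    simp only [assoc, biprod.inl_fst, comp_id, zero_comp] at h4
    exact sub_eq_zero.mp h4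
  have hIso : IsIso ψ := ⟨σ ≫ p, hψτ, hτψ⟩
  refine isomorphic_distinguished _ hT₃ _ ?_
  exact Triangle.isoMk (Triangle.mk a b c) (Triangle.mk a b₀ c₀)
    (Iso.refl _) (Iso.refl _) (@asIso _ _ _ _ ψ hIso)
    (by exact (comp_id _).trans (id_comp _).symm)
    (by show b ≫ ψ = 𝟙 B ≫ b₀; rw [id_comp]; exact hbψ)
    (by show c ≫ (shiftFunctor C 1).map (𝟙 Y) = ψ ≫ c₀; rw [CategoryTheory.Functor.map_id, comp_id]; exact hψc.symm)

end StmtNineAux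
theorem stmt_9 {X Y Z Y' Z' : C}
    (u : X ⟶ Y) (v : Y ⟶ Z) (w : Z ⟶ X⟦(1 : ℤ)⟧)
    (u' : X ⟶ Y') (v' : Y' ⟶ Z') (w' : Z' ⟶ X⟦(1 : ℤ)⟧)
    (hT : Triangle.mk u v w ∈ distTriang C)
    (hT' : Triangle.mk u' v' w' ∈ distTriang C)
    (g : Y ⟶ Y') (h : Z ⟶ Z')
    (hmap : IsTriMap (Triangle.mk u v w) (Triangle.mk u' v' w') (𝟙 X) g h) :
    IsGood (Triangle.mk u v w) (Triangle.mk u' v' w') (𝟙 X) g h ↔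
      (Triangle.mk (biprod.lift g v) (biprod.desc v' (-h)) (w' ≫ u⟦(1 : ℤ)⟧') ∈
        distTriang C) := by
  obtain ⟨hu, hvh, hwh⟩ := hmap
  dsimp only [IsTriMap, Triangle.mk] at hu hvh hwh
  rw [id_comp] at hu
  rw [CategoryTheory.Functor.map_id, comp_id] at hwh
  have huv : u ≫ v = 0 := comp_distTriang_mor_zero₁₂ _ hT
  have hv'w' : v' ≫ w' = 0 := comp_distTriang_mor_zero₂₃ _ hT'
  have isoCD : mappingCone (Triangle.mk u v w) (Triangle.mk u' v' w') (𝟙 X) g h ≅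
      Triangle.mk (biprod.snd ≫ biprod.lift g v : X ⊞ Y ⟶ Y' ⊞ Z)
        (biprod.lift (biprod.desc v' (-h)) (0 : Y' ⊞ Z ⟶ X⟦(1 : ℤ)⟧))
        (biprod.desc (biprod.lift 0 (w' ≫ u⟦(1 : ℤ)⟧'))
            (biprod.lift (𝟙 (X⟦(1 : ℤ)⟧)) 0) ≫
          ((shiftFunctor C (1 : ℤ)).mapBiprod X Y).inv) := by
    refine Triangle.isoMk _ _
      (show X ⊞ Y ≅ X ⊞ Y from
        ⟨biprod.desc (biprod.lift (𝟙 X) u) biprod.inr,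
         biprod.desc (biprod.lift (𝟙 X) (-u)) biprod.inr,
         by ext <;> simp [biprod.lift_desc], by ext <;> simp [biprod.lift_desc]⟩)
      (show Y' ⊞ Z ≅ Y' ⊞ Z from
        ⟨biprod.map (𝟙 Y') (-𝟙 Z), biprod.map (𝟙 Y') (-𝟙 Z),
         by ext <;> simp, by ext <;> simp⟩)
      (show Z' ⊞ X⟦(1 : ℤ)⟧ ≅ Z' ⊞ X⟦(1 : ℤ)⟧ from
        ⟨biprod.desc (biprod.lift (𝟙 Z') w') biprod.inr,
         biprod.desc (biprod.lift (𝟙 Z') (-w')) biprod.inr,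
         by ext <;> simp [biprod.lift_desc], by ext <;> simp [biprod.lift_desc]⟩)
      ?_ ?_ ?_
    · -- first square
      show biprod.desc (biprod.lift u' 0) (biprod.lift g (-v)) ≫ biprod.map (𝟙 Y') (-𝟙 Z) =
        biprod.desc (biprod.lift (𝟙 X) u) biprod.inr ≫ ((biprod.snd : X ⊞ Y ⟶ Y) ≫ biprod.lift g v)
      refine biprod.hom_ext' _ _ ?_ ?_ <;> refine biprod.hom_ext _ _ ?_ ?_ <;>
        simp [biprod.lift_desc, hu, huv]
    · -- second square
      show (biprod.desc (biprod.lift v' 0) (biprod.lift h (-w)) : Y' ⊞ Z ⟶ Z' ⊞ X⟦(1 : ℤ)⟧) ≫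
          biprod.desc (biprod.lift (𝟙 Z') w') biprod.inr =
        biprod.map (𝟙 Y') (-𝟙 Z) ≫ biprod.lift (biprod.desc v' (-h)) (0 : Y' ⊞ Z ⟶ X⟦(1 : ℤ)⟧)
      refine biprod.hom_ext' _ _ ?_ ?_ <;> refine biprod.hom_ext _ _ ?_ ?_ <;>
        simp [biprod.lift_desc, hv'w', ← hwh]
    · -- third square
      show (biprod.desc (biprod.lift w' 0) (biprod.lift ((𝟙 X)⟦(1 : ℤ)⟧') (-(u⟦(1 : ℤ)⟧'))) ≫
          ((shiftFunctor C (1 : ℤ)).mapBiprod X Y).inv) ≫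
          (biprod.desc (biprod.lift (𝟙 X) u) biprod.inr)⟦(1 : ℤ)⟧' =
        biprod.desc (biprod.lift (𝟙 Z') w') biprod.inr ≫
          (biprod.desc (biprod.lift 0 (w' ≫ u⟦(1 : ℤ)⟧')) (biprod.lift (𝟙 (X⟦(1 : ℤ)⟧)) 0) ≫
            ((shiftFunctor C (1 : ℤ)).mapBiprod X Y).inv)
      refine biprod.hom_ext' _ _ ?_ ?_ <;>
        · simp only [assoc, biprod.inl_desc_assoc, biprod.inr_desc_assoc, biprod.lift_desc_assoc,
            stmt9_liftinv_assoc, Preadditive.add_comp, stmt9_liftinv]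
          simp [biprod.lift_desc, biprod.lift_eq, Preadditive.add_comp,
            Preadditive.sub_comp, ← Functor.map_comp, Functor.map_add]
          try abel
  constructor
  · intro hgood
    have hc : mappingCone (Triangle.mk u v w) (Triangle.mk u' v' w') (𝟙 X) g h ∈
        distTriang C := hgood
    exact stmt9_extract _ _ _ (isomorphic_distinguished _ hc _ isoCD.symm)
  · intro hhc
    have hd := stmt9_sum (X := X) _ _ _ hhc
    exact isomorphic_distinguished _ hd _ isoCD
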